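/- arXiv:2604.25507 — 3 statements merged into one kernel-verified Lean document; each statement's English description precedes it below -/
import Mathlib

section
/- Let β : [0,1] → [0,1] be continuous and strictly increasing with β(0)=0, β(1)=1, and suppose β(α) = α holds only for α in a finite set {0 = α₀ < α₁ < … < α_m = 1}. If Λ : [0,1] → ℝ is continuous and satisfies Λ(β(α)) = Λ(α) for all α ∈ [0,1], then Λ is constant on [0,1]. -/
/-!
A continuous monotone self-map of a compact interval pushes every orbit monotonically to a fixed
point, so a continuous invariant function `Λ` takes at `x` the value it takes at the limit of the
orbit of `x`. Hence `Λ` maps the interval into the image of the finite set of fixed points; being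
continuous on a connected set, it is constant.
-/

open Filter Topology Function Set

theorem apply_eq_of_tendsto_iterate_of_comp_eq {X Y : Type*} [TopologicalSpace X]
    [TopologicalSpace Y] [T2Space Y] {f : X → X} {g : X → Y} (hgf : g ∘ f = g) {x p : X}
    (hp : Tendsto (fun n => f^[n] x) atTop (𝓝 p)) (hg : ContinuousAt g p) : g p = g x := by
  have horbit : g ∘ (fun n => f^[n] x) = fun _ => g x :=
    funext fun n => congrFun (iterate_invariant hgf n) x
  exact tendsto_nhds_unique (hg.tendsto.comp hp) (horbit ▸ tendsto_const_nhds)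

section CompleteLinearOrder

variable {α : Type*} [CompleteLinearOrder α] [TopologicalSpace α] [OrderTopology α] {f : α → α}

theorem Monotone.exists_isFixedPt_tendsto_iterate (hf : Monotone f) (hc : Continuous f)
    (x : α) : ∃ p, IsFixedPt f p ∧ Tendsto (fun n => f^[n] x) atTop (𝓝 p) := by
  obtain ⟨p, hp⟩ : ∃ p, Tendsto (fun n => f^[n] x) atTop (𝓝 p) := by
    rcases le_total x (f x) with h | h
    · exact ⟨_, tendsto_atTop_iSup (hf.monotone_iterate_of_le_map h)⟩
    · exact ⟨_, tendsto_atTop_iInf (hf.antitone_iterate_of_map_le h)⟩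
  exact ⟨p, isFixedPt_of_tendsto_iterate hp hc.continuousAt, hp⟩

theorem Monotone.apply_eq_apply_of_comp_eq_of_finite_fixedPoints [ConnectedSpace α]
    {Y : Type*} [TopologicalSpace Y] [T2Space Y] (hf : Monotone f) (hc : Continuous f)
    (hfix : (fixedPoints f).Finite) {g : α → Y} (hg : Continuous g) (hgf : g ∘ f = g)
    (x y : α) : g x = g y := by
  have hmaps : MapsTo g univ (g '' fixedPoints f) := fun z _ => by
    obtain ⟨p, hpfix, hp⟩ := hf.exists_isFixedPt_tendsto_iterate hc z
    exact ⟨p, hpfix, apply_eq_of_tendsto_iterate_of_comp_eq hgf hp hg.continuousAt⟩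
  exact isPreconnected_univ.constant_of_mapsTo (hfix.image g).isDiscrete hg.continuousOn hmaps
    trivial trivial

end CompleteLinearOrder

theorem stmt_3_general (β : ℝ → ℝ) (Λ : ℝ → ℝ)
    (hmaps : Set.MapsTo β (Set.Icc 0 1) (Set.Icc 0 1))
    (hcont : ContinuousOn β (Set.Icc 0 1))
    (hmono : StrictMonoOn β (Set.Icc 0 1))
    (hfix : {α ∈ Set.Icc (0:ℝ) 1 | β α = α}.Finite)
    (hΛcont : ContinuousOn Λ (Set.Icc 0 1))
    (hΛeq : ∀ α ∈ Set.Icc (0:ℝ) 1, Λ (β α) = Λ α) :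
    ∀ a ∈ Set.Icc (0:ℝ) 1, ∀ b ∈ Set.Icc (0:ℝ) 1, Λ a = Λ b := by
  intro a ha b hb
  let F : Icc (0:ℝ) 1 → Icc (0:ℝ) 1 := hmaps.restrict β _ _
  have hF : Monotone F := fun x y hxy => hmono.monotoneOn x.2 y.2 hxy
  have hFfix : (fixedPoints F).Finite :=
    (hfix.preimage Subtype.val_injective.injOn).subset fun x hx => ⟨x.2, congrArg Subtype.val hx⟩
  have hΛF : (Icc (0:ℝ) 1).domRestrict Λ ∘ F = (Icc (0:ℝ) 1).domRestrict Λ :=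
    funext fun x => hΛeq x x.2
  exact hF.apply_eq_apply_of_comp_eq_of_finite_fixedPoints (hcont.mapsToRestrict hmaps) hFfix
    hΛcont.domRestrict hΛF ⟨a, ha⟩ ⟨b, hb⟩

theorem stmt_3 (β : ℝ → ℝ) (Λ : ℝ → ℝ)
    (hmaps : Set.MapsTo β (Set.Icc 0 1) (Set.Icc 0 1))
    (hcont : ContinuousOn β (Set.Icc 0 1))
    (hmono : StrictMonoOn β (Set.Icc 0 1))
    (hβ0 : β 0 = 0) (hβ1 : β 1 = 1)
    (hfix : {α ∈ Set.Icc (0:ℝ) 1 | β α = α}.Finite)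
    (hΛcont : ContinuousOn Λ (Set.Icc 0 1))
    (hΛeq : ∀ α ∈ Set.Icc (0:ℝ) 1, Λ (β α) = Λ α) :
    ∀ a ∈ Set.Icc (0:ℝ) 1, ∀ b ∈ Set.Icc (0:ℝ) 1, Λ a = Λ b :=
  stmt_3_general β Λ hmaps hcont hmono hfix hΛcont hΛeq
end

section
/- Let β : [0,1] → [0,1] be continuous, strictly increasing, with β(0)=0, β(1)=1, fixed-point set finite, and let Λ : [0,1] → ℝ be continuous with Λ(0) = 0. If Λ(β(α)) = Λ(α) for all α ∈ [0,1], then Λ(α) = 0 for all α ∈ [0,1]. -/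
private lemma orbit_fixed (β Λ : ℝ → ℝ)
    (hmaps : Set.MapsTo β (Set.Icc 0 1) (Set.Icc 0 1))
    (hcont : ContinuousOn β (Set.Icc 0 1))
    (hmono : StrictMonoOn β (Set.Icc 0 1))
    (hΛcont : ContinuousOn Λ (Set.Icc 0 1))
    (hΛeq : ∀ α ∈ Set.Icc (0:ℝ) 1, Λ (β α) = Λ α)
    (α : ℝ) (hα : α ∈ Set.Icc (0:ℝ) 1) :
    ∃ p ∈ Set.Icc (0:ℝ) 1, β p = p ∧ Λ α = Λ p := by
  set a : ℕ → ℝ := fun n => β^[n] α with ha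
  have hmem : ∀ n, a n ∈ Set.Icc (0:ℝ) 1 := fun n => hmaps.iterate n hα
  have hstep : ∀ n, a (n+1) = β (a n) := fun n => Function.iterate_succ_apply' β n α
  have hΛconst : ∀ n, Λ (a n) = Λ α := by
    intro n; induction n with
    | zero => rfl
    | succ n ih => rw [hstep, hΛeq _ (hmem n), ih]
  have hconv : ∃ L ∈ Set.Icc (0:ℝ) 1, Filter.Tendsto a Filter.atTop (nhds L) := by
    rcases le_total α (β α) with h | h
    · have hmon : Monotone a := by
        apply monotone_nat_of_le_succ
        intro n; induction n with
        | zero => simpa [ha] using h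
        | succ n ih =>
          simpa only [← hstep] using hmono.monotoneOn (hmem n) (hmem (n+1)) ih
      have hbdd : BddAbove (Set.range a) := ⟨1, by rintro _ ⟨n, rfl⟩; exact (hmem n).2⟩
      refine ⟨⨆ n, a n, ⟨?_, ?_⟩, tendsto_atTop_ciSup hmon hbdd⟩
      · exact le_trans (hmem 0).1 (le_ciSup hbdd 0)
      · exact ciSup_le fun n => (hmem n).2
    · have hmon : Antitone a := by
        apply antitone_nat_of_succ_le
        intro n; induction n with
        | zero => simpa [ha] using h
        | succ n ih =>
          simpa only [← hstep] using hmono.monotoneOn (hmem (n+1)) (hmem n) ih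
      have hbdd : BddBelow (Set.range a) := ⟨0, by rintro _ ⟨n, rfl⟩; exact (hmem n).1⟩
      refine ⟨⨅ n, a n, ⟨?_, ?_⟩, tendsto_atTop_ciInf hmon hbdd⟩
      · exact le_ciInf fun n => (hmem n).1
      · exact le_trans (ciInf_le hbdd 0) (hmem 0).2
  obtain ⟨L, hL, htend⟩ := hconv
  have htendW : Filter.Tendsto a Filter.atTop (nhdsWithin L (Set.Icc 0 1)) :=
    tendsto_nhdsWithin_of_tendsto_nhds_of_eventually_within a htend
      (Filter.Eventually.of_forall hmem)
  have hβL : β L = L := by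
    have h1 : Filter.Tendsto (fun n => β (a n)) Filter.atTop (nhds (β L)) :=
      (hcont L hL).tendsto.comp htendW
    have h2 : Filter.Tendsto (fun n => a (n+1)) Filter.atTop (nhds L) :=
      htend.comp (Filter.tendsto_add_atTop_nat 1)
    have h2' : Filter.Tendsto (fun n => β (a n)) Filter.atTop (nhds L) := by
      simpa [hstep] using h2
    exact tendsto_nhds_unique h1 h2'
  have hΛL : Λ α = Λ L := by
    have h1 : Filter.Tendsto (fun n => Λ (a n)) Filter.atTop (nhds (Λ L)) :=
      (hΛcont L hL).tendsto.comp htendW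
    have h1' : Filter.Tendsto (fun _ : ℕ => Λ α) Filter.atTop (nhds (Λ L)) := by
      simpa [hΛconst] using h1
    exact tendsto_nhds_unique tendsto_const_nhds h1'
  exact ⟨L, hL, hβL, hΛL⟩

theorem stmt_4 (β : ℝ → ℝ) (Λ : ℝ → ℝ)
    (hmaps : Set.MapsTo β (Set.Icc 0 1) (Set.Icc 0 1))
    (hcont : ContinuousOn β (Set.Icc 0 1))
    (hmono : StrictMonoOn β (Set.Icc 0 1))
    (hβ0 : β 0 = 0) (hβ1 : β 1 = 1)
    (hfix : {α ∈ Set.Icc (0:ℝ) 1 | β α = α}.Finite)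
    (hΛcont : ContinuousOn Λ (Set.Icc 0 1))
    (hΛ0 : Λ 0 = 0)
    (hΛeq : ∀ α ∈ Set.Icc (0:ℝ) 1, Λ (β α) = Λ α) :
    ∀ α ∈ Set.Icc (0:ℝ) 1, Λ α = 0 := by
  intro α hα
  set S : Set ℝ := Λ '' Set.Icc 0 1 with hS
  have hSfin : S.Finite := by
    apply (hfix.image Λ).subset
    rintro _ ⟨x, hx, rfl⟩
    obtain ⟨p, hp, hβp, hΛp⟩ := orbit_fixed β Λ hmaps hcont hmono hΛcont hΛeq x hx
    exact ⟨p, ⟨hp, hβp⟩, hΛp.symm⟩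
  have hSpc : IsPreconnected S := isPreconnected_Icc.image Λ hΛcont
  have h0 : (0:ℝ) ∈ S := ⟨0, Set.left_mem_Icc.2 zero_le_one, hΛ0⟩
  have hαS : Λ α ∈ S := ⟨α, hα, rfl⟩
  have hoc : S.OrdConnected := hSpc.ordConnected
  by_contra hne
  rcases lt_or_gt_of_ne hne with hlt | hgt
  · exact ((Set.Icc_infinite hlt).mono (hoc.out hαS h0)) hSfin
  · exact ((Set.Icc_infinite hgt).mono (hoc.out h0 hαS)) hSfin
end

section
/- Let Λ, Λ̃ : [0,1] → ℝ both satisfy the functional equation Λ(β(α)) − Λ(α) = r(α) for all α ∈ [0,1], where β : [0,1] → [0,1] is continuous strictly increasing with finitely many fixed points including 0 and 1, and r : [0,1] → ℝ. If Λ and Λ̃ are both continuous and Λ(0) = Λ̃(0), then Λ = Λ̃ on [0,1]. -/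
/-!
Both solutions differ by a continuous function `D` with `D ∘ β = D`. Since `β` is monotone, every
orbit `βⁿ(α)` is monotone and bounded, so it converges, necessarily to a fixed point `p` of `β`,
and continuity gives `D α = D p`. Hence `D` maps the connected set `[0, 1]` into the finite set
of values of `D` at fixed points, so `D` is constant, and `D 0 = 0`.
-/

open Set Filter Topology Function

section Iterate

variable {α : Type*} [Preorder α] {f : α → α} {s : Set α} {x : α}

theorem MonotoneOn.monotone_iterate_of_le_map (hf : MonotoneOn f s) (hs : MapsTo f s s)
    (hx : x ∈ s) (hxf : x ≤ f x) : Monotone fun n => f^[n] x := by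
  refine monotone_nat_of_le_succ fun n => ?_
  induction n with
  | zero => simpa using hxf
  | succ n ih =>
    exact (iterate_succ_apply' f n x).trans_le <|
      (hf (hs.iterate n hx) (hs.iterate (n + 1) hx) ih).trans_eq (iterate_succ_apply' f _ x).symm

theorem MonotoneOn.antitone_iterate_of_map_le (hf : MonotoneOn f s) (hs : MapsTo f s s)
    (hx : x ∈ s) (hfx : f x ≤ x) : Antitone fun n => f^[n] x := by
  refine antitone_nat_of_succ_le fun n => ?_
  induction n with
  | zero => simpa using hfx
  | succ n ih =>
    exact (iterate_succ_apply' f _ x).trans_le <|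
      (hf (hs.iterate (n + 1) hx) (hs.iterate n hx) ih).trans_eq (iterate_succ_apply' f n x).symm

end Iterate

section Orbit

variable {α X : Type*} [TopologicalSpace α] [TopologicalSpace X] [T2Space X]
  {f : α → α} {D : α → X} {s : Set α} {x y : α}

theorem isFixedPt_of_tendsto_iterate_of_continuousWithinAt [T2Space α]
    (hy : Tendsto (fun n => f^[n] x) atTop (𝓝 y)) (hs : ∀ n, f^[n] x ∈ s)
    (hf : ContinuousWithinAt f s y) : IsFixedPt f y := by
  refine tendsto_nhds_unique ((tendsto_add_atTop_iff_nat 1).1 ?_) hy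
  simp only [iterate_succ' f]
  exact hf.tendsto.comp (tendsto_nhdsWithin_iff.2 ⟨hy, Eventually.of_forall hs⟩)

theorem apply_eq_of_tendsto_iterate (hy : Tendsto (fun n => f^[n] x) atTop (𝓝 y))
    (hs : MapsTo f s s) (hx : x ∈ s) (hDy : ContinuousWithinAt D s y)
    (hDf : ∀ z ∈ s, D (f z) = D z) : D y = D x := by
  have hDorbit : ∀ n, D (f^[n] x) = D x := by
    intro n
    induction n with
    | zero => rfl
    | succ n ih => rw [iterate_succ_apply', hDf _ (hs.iterate n hx), ih]
  refine tendsto_nhds_unique ?_ (tendsto_const_nhds : Tendsto (fun _ : ℕ => D x) atTop _)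
  refine (hDy.tendsto.comp (tendsto_nhdsWithin_iff.2 ⟨hy, ?_⟩)).congr hDorbit
  exact Eventually.of_forall fun n => hs.iterate n hx

end Orbit

section Interval

variable {α X : Type*} [ConditionallyCompleteLinearOrder α] [TopologicalSpace α] [OrderTopology α]
  [TopologicalSpace X] [T2Space X] {f : α → α} {D : α → X} {a b x y : α}

theorem exists_tendsto_iterate_of_monotoneOn_Icc (hmaps : MapsTo f (Icc a b) (Icc a b))
    (hmono : MonotoneOn f (Icc a b)) (hx : x ∈ Icc a b) :
    ∃ y ∈ Icc a b, Tendsto (fun n => f^[n] x) atTop (𝓝 y) := by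
  have horbit : ∀ n, f^[n] x ∈ Icc a b := fun n => hmaps.iterate n hx
  have hlim : ∃ y, Tendsto (fun n => f^[n] x) atTop (𝓝 y) := by
    rcases le_total x (f x) with hxf | hfx
    · exact ⟨_, tendsto_atTop_ciSup (hmono.monotone_iterate_of_le_map hmaps hx hxf)
        ⟨b, forall_mem_range.2 fun n => (horbit n).2⟩⟩
    · exact ⟨_, tendsto_atTop_ciInf (hmono.antitone_iterate_of_map_le hmaps hx hfx)
        ⟨a, forall_mem_range.2 fun n => (horbit n).1⟩⟩
  obtain ⟨y, hy⟩ := hlim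
  exact ⟨y, isClosed_Icc.mem_of_tendsto hy (Eventually.of_forall horbit), hy⟩

theorem exists_isFixedPt_apply_eq (hmaps : MapsTo f (Icc a b) (Icc a b))
    (hcont : ContinuousOn f (Icc a b)) (hmono : MonotoneOn f (Icc a b))
    (hD : ContinuousOn D (Icc a b)) (hDf : ∀ z ∈ Icc a b, D (f z) = D z) (hx : x ∈ Icc a b) :
    ∃ y ∈ {z ∈ Icc a b | IsFixedPt f z}, D y = D x := by
  obtain ⟨y, hyI, hy⟩ := exists_tendsto_iterate_of_monotoneOn_Icc hmaps hmono hx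
  exact ⟨y, ⟨hyI, isFixedPt_of_tendsto_iterate_of_continuousWithinAt hy
    (fun n => hmaps.iterate n hx) (hcont y hyI)⟩,
    apply_eq_of_tendsto_iterate hy hmaps hx (hD y hyI) hDf⟩

theorem apply_eq_of_invariant_of_finite_fixedPoints [DenselyOrdered α]
    (hmaps : MapsTo f (Icc a b) (Icc a b)) (hcont : ContinuousOn f (Icc a b))
    (hmono : MonotoneOn f (Icc a b)) (hfix : {z ∈ Icc a b | IsFixedPt f z}.Finite)
    (hD : ContinuousOn D (Icc a b)) (hDf : ∀ z ∈ Icc a b, D (f z) = D z)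
    (hx : x ∈ Icc a b) (hy : y ∈ Icc a b) : D x = D y := by
  have himage : D '' Icc a b ⊆ D '' {z ∈ Icc a b | IsFixedPt f z} := by
    rintro _ ⟨z, hz, rfl⟩
    exact exists_isFixedPt_apply_eq hmaps hcont hmono hD hDf hz
  have hsub : (D '' Icc a b).Subsingleton := not_nontrivial_iff.1 fun hnt =>
    (isPreconnected_Icc.image D hD).infinite_of_nontrivial hnt ((hfix.image D).subset himage)
  exact hsub (mem_image_of_mem D hx) (mem_image_of_mem D hy)

end Interval

theorem stmt_11_general (β r Λ Λ' : ℝ → ℝ)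
    (hmaps : Set.MapsTo β (Set.Icc 0 1) (Set.Icc 0 1))
    (hcont : ContinuousOn β (Set.Icc 0 1))
    (hmono : StrictMonoOn β (Set.Icc 0 1))
    (hfix : {α ∈ Set.Icc (0:ℝ) 1 | β α = α}.Finite)
    (hΛcont : ContinuousOn Λ (Set.Icc 0 1))
    (hΛ'cont : ContinuousOn Λ' (Set.Icc 0 1))
    (hΛeq : ∀ α ∈ Set.Icc (0:ℝ) 1, Λ (β α) - Λ α = r α)
    (hΛ'eq : ∀ α ∈ Set.Icc (0:ℝ) 1, Λ' (β α) - Λ' α = r α)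
    (h0 : Λ 0 = Λ' 0) :
    ∀ α ∈ Set.Icc (0:ℝ) 1, Λ α = Λ' α := by
  intro α hα
  have hinv : ∀ z ∈ Icc (0:ℝ) 1, (Λ - Λ') (β z) = (Λ - Λ') z := by
    intro z hz
    simp only [Pi.sub_apply]
    linarith [hΛeq z hz, hΛ'eq z hz]
  have hconst := apply_eq_of_invariant_of_finite_fixedPoints hmaps hcont hmono.monotoneOn hfix
    (hΛcont.sub hΛ'cont) hinv hα (left_mem_Icc.2 zero_le_one)
  rwa [Pi.sub_apply, Pi.sub_apply, h0, sub_self, sub_eq_zero] at hconst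

theorem stmt_11 (β r Λ Λ' : ℝ → ℝ)
    (hmaps : Set.MapsTo β (Set.Icc 0 1) (Set.Icc 0 1))
    (hcont : ContinuousOn β (Set.Icc 0 1))
    (hmono : StrictMonoOn β (Set.Icc 0 1))
    (hβ0 : β 0 = 0) (hβ1 : β 1 = 1)
    (hfix : {α ∈ Set.Icc (0:ℝ) 1 | β α = α}.Finite)
    (hΛcont : ContinuousOn Λ (Set.Icc 0 1))
    (hΛ'cont : ContinuousOn Λ' (Set.Icc 0 1))
    (hΛeq : ∀ α ∈ Set.Icc (0:ℝ) 1, Λ (β α) - Λ α = r α)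
    (hΛ'eq : ∀ α ∈ Set.Icc (0:ℝ) 1, Λ' (β α) - Λ' α = r α)
    (h0 : Λ 0 = Λ' 0) :
    ∀ α ∈ Set.Icc (0:ℝ) 1, Λ α = Λ' α :=
  stmt_11_general β r Λ Λ' hmaps hcont hmono hfix hΛcont hΛ'cont hΛeq hΛ'eq h0
end
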